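/- arXiv:1003.0245 — 2 statements merged into one kernel-verified Lean document; each statement's English description precedes it below -/
import Mathlib

section
/- Let $A, B \subseteq \mathbb{Z}^n$ be finite nonempty sets. Then there exists a finite nonempty set $C \subseteq \mathbb{Z}^n$ such that $L_A \cdot L_C = L_B \cdot L_C$ in the Laurent polynomial ring $\mathbb{C}[x_1^{\pm 1}, \dots, x_n^{\pm 1}]$ if and only if the convex hulls of $A$ and $B$ in $\mathbb{R}^n$ coincide. (Equivalently: the Grothendieck semigroup of the semigroup $K_{\mathrm{mat}}[(\mathbb{C}^*)^n]$ of subspaces $L_A$ under product of subspaces is isomorphic to the semigroup of convex integral polytopes under Minkowski sum, via $L_A \mapsto \Delta(A)$.) -/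
/-!
Since `L_A · L_C = L_{A+C}` and `A ↦ L_A` is injective, the condition reads `A + C = B + C`.

If `A + C ⊆ B + C` and some `x ∈ A` lies outside `Δ(B)`, separate `x` from `Δ(B)` by a linear
functional `f` and let `c ∈ C` maximize `f` on `C`: then `f (x + c)` exceeds `f` on all of `B + C`,
although `x + c ∈ A + C`.

Conversely, let `P = Δ(A) = Δ(B)` and let `C` be the set of lattice points of `N • P`, where
`N ≥ |A|, |B|`. Then `A + C` is the set of lattice points of `(N + 1) • P`: if `x = (N + 1) • y`
with `y` a convex combination of `A`, some `a ∈ A` has weight at least `1 / |A|` in `y`, hence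
weight at least `1` in `x`, and `x - a` is a lattice point of `N • P`. The same holds for `B`.
-/

open Pointwise

def latticeEmb (n : ℕ) : (Fin n → ℤ) → (Fin n → ℝ) := fun k i => (k i : ℝ)

/-- The subspace `L_A` of the Laurent polynomial algebra
`ℂ[x₁^{±1}, …, xₙ^{±1}]` (the monoid algebra of `ℤⁿ` over `ℂ`)
spanned by the monomials `x^k`, `k ∈ A`. -/
noncomputable def laurentSubspace (n : ℕ) (A : Finset (Fin n → ℤ)) :
    Submodule ℂ (AddMonoidAlgebra ℂ (Fin n → ℤ)) :=
  Submodule.span ℂ {f | ∃ k ∈ A, f = AddMonoidAlgebra.single k 1}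

section ConvexCancellation

variable {E : Type*} [AddCommGroup E] [Module ℝ E] [TopologicalSpace E] [IsTopologicalAddGroup E]
  [ContinuousSMul ℝ E] [LocallyConvexSpace ℝ E] [T2Space E]

theorem convexHull_subset_of_add_subset_add {s t u : Set E} (ht : t.Finite) (hu : u.Finite)
    (hu' : u.Nonempty) (h : s + u ⊆ t + u) : convexHull ℝ s ⊆ convexHull ℝ t := by
  refine convexHull_min (fun x hx => ?_) (convex_convexHull ℝ t)
  by_contra hxt
  obtain ⟨f, c, hft, hcx⟩ := geometric_hahn_banach_closed_point (convex_convexHull ℝ t)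
    (ht.isClosed_convexHull ℝ) hxt
  obtain ⟨v, hv, hv_max⟩ := Set.exists_max_image u f hu hu'
  obtain ⟨y, hy, w, hw, hyw⟩ := h (Set.add_mem_add hx hv)
  have hfy := hft y (subset_convexHull ℝ t hy)
  have hfw := hv_max w hw
  have hf_sum : f y + f w = f x + f v := by simpa using congrArg f hyw
  linarith

end ConvexCancellation

theorem exists_sub_mem_smul_convexHull_of_mem_add_one_smul {E : Type*} [AddCommGroup E]
    [Module ℝ E] {s : Finset E} {r : ℝ} (hr : (s.card : ℝ) ≤ r) {x : E}
    (hx : x ∈ (r + 1) • convexHull ℝ (s : Set E)) :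
    ∃ a ∈ s, x - a ∈ r • convexHull ℝ (s : Set E) := by
  classical
  obtain ⟨y, hy, rfl⟩ := hx
  obtain ⟨w, hw₀, hw₁, rfl⟩ := Finset.mem_convexHull'.1 hy
  have hs : s.Nonempty := by
    by_contra hs
    simp [Finset.not_nonempty_iff_eq_empty.1 hs] at hw₁
  have hr₀ : 0 < r := (Nat.cast_pos.2 hs.card_pos).trans_le hr
  obtain ⟨a, ha, hwa⟩ : ∃ a ∈ s, 1 ≤ s.card * w a := by
    refine Finset.exists_le_of_sum_le hs ?_
    rw [Finset.sum_const, ← Finset.mul_sum, hw₁, nsmul_one, mul_one]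
  set v : E → ℝ := fun c => (r + 1) * w c - if c = a then 1 else 0
  have hv₀ : ∀ c ∈ s, 0 ≤ v c := by
    intro c hc
    have hwc := hw₀ c hc
    by_cases hca : c = a
    · subst hca
      simp only [v, if_true]
      nlinarith
    · simp only [v, hca, if_false, sub_zero]
      positivity
  have hv₁ : ∑ c ∈ s, v c = r := by
    simp only [v, Finset.sum_sub_distrib, ← Finset.mul_sum, hw₁, Finset.sum_ite_eq', ha, if_true]
    ring
  have hv_smul : ∑ c ∈ s, v c • c = (r + 1) • ∑ c ∈ s, w c • c - a := by
    simp only [v, sub_smul, Finset.sum_sub_distrib, mul_smul, ← Finset.smul_sum, ite_smul,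
      one_smul, zero_smul, Finset.sum_ite_eq', ha, if_true]
  refine ⟨a, ha, s.centerMass v id, s.centerMass_id_mem_convexHull hv₀ (hv₁ ▸ hr₀), ?_⟩
  simp only [Finset.centerMass, hv₁, smul_inv_smul₀ hr₀.ne', id, hv_smul]

section Laurent

open AddMonoidAlgebra

variable {n : ℕ}

theorem laurentSubspace_eq_span (A : Finset (Fin n → ℤ)) :
    laurentSubspace n A = Submodule.span ℂ ((fun k => single k (1 : ℂ)) '' ↑A) := by
  rw [laurentSubspace]
  congr 1
  ext f
  simp [eq_comm]

theorem single_one_mem_laurentSubspace {A : Finset (Fin n → ℤ)} {k : Fin n → ℤ} :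
    single k 1 ∈ laurentSubspace n A ↔ k ∈ A := by
  rw [laurentSubspace_eq_span]
  exact single_mem_span_single

theorem laurentSubspace_injective : Function.Injective (laurentSubspace n) := fun A B h =>
  Finset.ext fun k => by rw [← single_one_mem_laurentSubspace, h, single_one_mem_laurentSubspace]

theorem laurentSubspace_mul (A C : Finset (Fin n → ℤ)) :
    laurentSubspace n A * laurentSubspace n C = laurentSubspace n (A + C) := by
  simp only [laurentSubspace_eq_span, Submodule.span_mul_span, Finset.coe_add, ← Set.image2_mul,
    ← Set.image2_add, Set.image2_image_left, Set.image2_image_right, Set.image_image2,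
    single_mul_single, mul_one]

end Laurent

section Lattice

variable {n : ℕ}

def latticeEmbHom (n : ℕ) : (Fin n → ℤ) →+ (Fin n → ℝ) := (Int.castAddHom ℝ).compLeft (Fin n)

theorem coe_latticeEmbHom : ⇑(latticeEmbHom n) = latticeEmb n := rfl

theorem latticeEmb_add (k l : Fin n → ℤ) :
    latticeEmb n (k + l) = latticeEmb n k + latticeEmb n l :=
  map_add (latticeEmbHom n) k l

theorem latticeEmb_sub (k l : Fin n → ℤ) :
    latticeEmb n (k - l) = latticeEmb n k - latticeEmb n l :=
  map_sub (latticeEmbHom n) k l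

theorem latticeEmb_nsmul (m : ℕ) (k : Fin n → ℤ) :
    latticeEmb n (m • k) = (m : ℝ) • latticeEmb n k := by
  rw [Nat.cast_smul_eq_nsmul]
  exact map_nsmul (latticeEmbHom n) m k

theorem isometry_latticeEmb : Isometry (latticeEmb n) :=
  Isometry.piMap _ fun _ => Real.isometry_intCast

theorem Bornology.IsBounded.finite_preimage_latticeEmb {K : Set (Fin n → ℝ)}
    (hK : Bornology.IsBounded K) : (latticeEmb n ⁻¹' K).Finite :=
  (Metric.isCompact_of_isClosed_isBounded (isClosed_discrete _)
    (isometry_latticeEmb.antilipschitz.isBounded_preimage hK)).finite_of_discrete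

theorem convexHull_image_latticeEmb_subset_of_add_subset_add {A B C : Finset (Fin n → ℤ)}
    (hC : C.Nonempty) (h : A + C ⊆ B + C) :
    convexHull ℝ (latticeEmb n '' ↑A) ⊆ convexHull ℝ (latticeEmb n '' ↑B) := by
  refine convexHull_subset_of_add_subset_add (B.finite_toSet.image _)
    (C.finite_toSet.image (latticeEmb n)) ((Finset.coe_nonempty.2 hC).image (latticeEmb n)) ?_
  rw [← coe_latticeEmbHom, ← Set.image_add, ← Set.image_add, ← Finset.coe_add, ← Finset.coe_add]
  exact Set.image_mono (Finset.coe_subset.2 h)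

theorem coe_add_eq_preimage_add_one_smul_convexHull {A C : Finset (Fin n → ℤ)} {N : ℕ}
    (hN : A.card ≤ N)
    (hC : (C : Set (Fin n → ℤ)) = latticeEmb n ⁻¹' ((N : ℝ) • convexHull ℝ (latticeEmb n '' ↑A))) :
    ((A + C : Finset (Fin n → ℤ)) : Set (Fin n → ℤ)) =
      latticeEmb n ⁻¹' (((N : ℝ) + 1) • convexHull ℝ (latticeEmb n '' ↑A)) := by
  ext k
  rw [Finset.coe_add, Set.mem_add, hC, Set.mem_preimage]
  constructor
  · rintro ⟨a, ha, c, hc, rfl⟩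
    rw [add_comm (N : ℝ), (convex_convexHull ℝ _).add_smul zero_le_one (Nat.cast_nonneg N),
      one_smul, latticeEmb_add]
    exact Set.add_mem_add (subset_convexHull ℝ _ ⟨a, ha, rfl⟩) hc
  · intro hk
    rw [← Finset.coe_image] at hk
    obtain ⟨_, hA, hka⟩ := exists_sub_mem_smul_convexHull_of_mem_add_one_smul
      (by exact_mod_cast Finset.card_image_le.trans hN) hk
    obtain ⟨a, ha, rfl⟩ := Finset.mem_image.1 hA
    refine ⟨a, ha, k - a, ?_, add_sub_cancel a k⟩
    rwa [Set.mem_preimage, latticeEmb_sub, ← Finset.coe_image]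

end Lattice

theorem laurentSubspace_analogous_iff_convexHull_eq_general (n : ℕ) (A B : Finset (Fin n → ℤ))
    (hA : A.Nonempty) :
    (∃ C : Finset (Fin n → ℤ), C.Nonempty ∧
        laurentSubspace n A * laurentSubspace n C = laurentSubspace n B * laurentSubspace n C) ↔
      convexHull ℝ (latticeEmb n '' ↑A) = convexHull ℝ (latticeEmb n '' ↑B) := by
  simp only [laurentSubspace_mul, laurentSubspace_injective.eq_iff]
  constructor
  · rintro ⟨C, hC, hAC⟩
    exact (convexHull_image_latticeEmb_subset_of_add_subset_add hC hAC.le).antisymm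
      (convexHull_image_latticeEmb_subset_of_add_subset_add hC hAC.ge)
  · intro h
    obtain ⟨a, ha⟩ := hA
    obtain ⟨C, hC⟩ := ((((A.finite_toSet.image _).isCompact_convexHull ℝ).isBounded.smul₀
      ((max A.card B.card : ℕ) : ℝ)).finite_preimage_latticeEmb).exists_finset_coe
    refine ⟨C, ⟨max A.card B.card • a, ?_⟩, Finset.coe_injective ?_⟩
    · rw [← Finset.mem_coe, hC, Set.mem_preimage, latticeEmb_nsmul]
      exact Set.smul_mem_smul_set (subset_convexHull ℝ _ ⟨a, ha, rfl⟩)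
    · rw [coe_add_eq_preimage_add_one_smul_convexHull (le_max_left _ _) hC,
        coe_add_eq_preimage_add_one_smul_convexHull (le_max_right _ _) (h ▸ hC), h]

/-- Two subspaces of matrix elements `L_A, L_B` of `(ℂ*)ⁿ` are analogous (i.e.
`L_A · L_C = L_B · L_C` for some finite nonempty `C ⊆ ℤⁿ`) if and only if the convex hulls
of `A` and `B` in `ℝⁿ` coincide. -/
theorem laurentSubspace_analogous_iff_convexHull_eq (n : ℕ) (A B : Finset (Fin n → ℤ))
    (hA : A.Nonempty) (hB : B.Nonempty) :
    (∃ C : Finset (Fin n → ℤ), C.Nonempty ∧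
        laurentSubspace n A * laurentSubspace n C = laurentSubspace n B * laurentSubspace n C) ↔
      convexHull ℝ (latticeEmb n '' ↑A) = convexHull ℝ (latticeEmb n '' ↑B) :=
  laurentSubspace_analogous_iff_convexHull_eq_general n A B hA
end

section
/- For $\lambda = (\lambda_1, \dots, \lambda_n) \in \mathbb{R}^n$ with $\lambda_1 \geq \cdots \geq \lambda_n$, the $n(n-1)/2$-dimensional Lebesgue volume of the Gelfand–Cetlin polytope $\Delta_{GC}(\lambda) \subseteq \mathbb{R}^{n(n-1)/2}$ equals $\prod_{1 \le i < j \le n} \frac{\lambda_i - \lambda_j}{j - i}$, i.e., it equals the leading homogeneous component $\phi_W(\lambda)$ of the Weyl dimension polynomial $F_W(\lambda) = \prod_{1 \le i < j \le n} \frac{\lambda_i - \lambda_j + j - i}{j - i}$ of $\mathrm{GL}(n,\mathbb{C})$. -/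
open MeasureTheory

/-- Index set for the free entries of a Gelfand–Cetlin pattern for `GL(n)`:
rows `i = 1, …, n-1` (encoded by `Fin (n-1)`, row `i` being index `i - 1`), row `i`
having entries `j = 1, …, i` (encoded by `Fin i`).  It has `n(n-1)/2` elements. -/
abbrev GCIndex (n : ℕ) := (i : Fin (n - 1)) × Fin (i.val + 1)

/-- The `(i, j)` entry (in `1`-based coordinates, `1 ≤ j ≤ i ≤ n - 1`) of the triangular
array `x`, with the convention that row `n` is `λ`. -/
noncomputable def gcEntry (n : ℕ) (lam : ℕ → ℝ) (x : GCIndex n → ℝ) (i j : ℕ) : ℝ :=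
  if h : 1 ≤ j ∧ j ≤ i ∧ i ≤ n - 1 then
    x ⟨⟨i - 1, by omega⟩, ⟨j - 1, by show j - 1 < i - 1 + 1; omega⟩⟩
  else if i = n then lam j else 0

/-- The Gelfand–Cetlin polytope `Δ_GC(λ) ⊆ ℝ^{n(n-1)/2}` of `λ = (λ₁ ≥ ⋯ ≥ λₙ)`: triangular
arrays `(x_{i,j})_{1 ≤ j ≤ i ≤ n-1}` with the interlacing inequalities
`x_{i+1,j} ≥ x_{i,j} ≥ x_{i+1,j+1}` for `1 ≤ j ≤ i ≤ n-1`, where `x_{n,j} := λ_j`. -/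
noncomputable def gcPolytope (n : ℕ) (lam : ℕ → ℝ) : Set (GCIndex n → ℝ) :=
  {x | ∀ i j, 1 ≤ j → j ≤ i → i ≤ n - 1 →
    gcEntry n lam x i j ≤ gcEntry n lam x (i + 1) j ∧
    gcEntry n lam x (i + 1) (j + 1) ≤ gcEntry n lam x i j}

/-!
Slicing `Δ_GC(λ)` along its last free row `μ`, which interlaces `λ`, gives
`vol Δ_GC(λ) = ∫ vol Δ_GC(μ) dμ` over the box `λ_{k+1} ≤ μ_k ≤ λ_k`. By induction the integrand
is `det V(-μ) / det V(0, 1, …, n - 2)`, where `V` is the Vandermonde matrix and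
`det V(v) = ∏_{i<j} (v_j - v_i)`. Each row of `V(-μ)` depends on one coordinate of `μ` only, so
the integral of the determinant over the box is the determinant of the row-wise integrals. These
are differences of the antiderivatives `t^(j+1)/(j+1)`, and subtracting consecutive rows of
`V(-λ)` shows that this determinant is `det V(-λ) / (n - 1)!`; finally
`det V(0, …, n - 1) = (n - 1)! · det V(0, …, n - 2)`.
-/

section Vandermonde

open Matrix Finset

theorem integral_det_of_rows {ι α 𝕜 : Type*} [Fintype ι] [DecidableEq ι] [MeasurableSpace α]
    [RCLike 𝕜] {μ : ι → Measure α} [∀ i, SigmaFinite (μ i)]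
    (f : ι → α → ι → 𝕜) (hf : ∀ i j, Integrable (fun t => f i t j) (μ i)) :
    ∫ x, (of fun i j => f i (x i) j).det ∂Measure.pi μ =
      (of fun i j => ∫ t, f i t j ∂μ i).det := by
  simp_rw [← det_transpose (of _), det_apply', transpose_apply, of_apply]
  rw [integral_finsetSum _ fun σ _ => ?_]
  · refine sum_congr rfl fun σ _ => ?_
    rw [integral_const_mul, integral_fintype_prod_eq_prod (fun i t => f i t (σ i))]
  · exact (Integrable.fintype_prod (f := fun i t => f i t (σ i)) fun i => hf i (σ i)).const_mul _

theorem det_vandermonde_eq_det_pow_succ_sub {R : Type*} [CommRing R] {m : ℕ}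
    (a : Fin (m + 2) → R) :
    (vandermonde a).det =
      (of fun i j : Fin (m + 1) =>
        a i.succ ^ ((j : ℕ) + 1) - a i.castSucc ^ ((j : ℕ) + 1)).det := by
  let B : Matrix (Fin (m + 2)) (Fin (m + 2)) R := of fun i j =>
    Fin.cases (a 0 ^ (j : ℕ)) (fun k => a k.succ ^ (j : ℕ) - a k.castSucc ^ (j : ℕ)) i
  have hB : (vandermonde a).det = B.det :=
    det_eq_of_forall_row_eq_smul_add_pred (fun _ => 1) (fun _ => rfl)
      (fun i j => by simp [B])
  rw [hB, det_succ_column_zero, Fin.sum_univ_succ, sum_eq_zero fun i _ => by simp [B]]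
  simp [B, submatrix]

theorem prod_natCast_add_one_eq_factorial {R : Type*} [CommSemiring R] (k : ℕ) :
    ∏ j : Fin k, ((j : R) + 1) = k.factorial := by
  rw [Fin.prod_univ_eq_prod_range (fun j => (j : R) + 1), ← prod_range_add_one_eq_factorial]
  push_cast; rfl

theorem setIntegral_pi_Icc_det_vandermonde_neg {m : ℕ} (b : Fin (m + 2) → ℝ)
    (hb : ∀ k : Fin (m + 1), b k.succ ≤ b k.castSucc) :
    ∫ x in Set.univ.pi fun k : Fin (m + 1) => Set.Icc (b k.succ) (b k.castSucc),
      (vandermonde (-x)).det = (vandermonde (-b)).det / (m + 1).factorial := by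
  have hentry (k j : Fin (m + 1)) : ∫ t in Set.Icc (b k.succ) (b k.castSucc), (-t) ^ (j : ℕ) =
      ((j : ℝ) + 1)⁻¹ * ((-b k.succ) ^ ((j : ℕ) + 1) - (-b k.castSucc) ^ ((j : ℕ) + 1)) := by
    rw [integral_Icc_eq_integral_Ioc, ← intervalIntegral.integral_of_le (hb k),
      intervalIntegral.integral_comp_neg (fun t => t ^ (j : ℕ)), integral_pow, inv_mul_eq_div]
  have hint (k j : Fin (m + 1)) :
      IntegrableOn (fun t : ℝ => (-t) ^ (j : ℕ)) (Set.Icc (b k.succ) (b k.castSucc)) :=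
    (continuous_neg.pow _).integrableOn_Icc
  rw [volume_pi, Measure.restrict_pi_pi]
  calc ∫ x, (vandermonde (-x)).det ∂Measure.pi (fun k => volume.restrict _)
      = (of fun k j : Fin (m + 1) =>
          ∫ t in Set.Icc (b k.succ) (b k.castSucc), (-t) ^ (j : ℕ)).det :=
        integral_det_of_rows (fun (_ : Fin (m + 1)) (t : ℝ) (j : Fin (m + 1)) => (-t) ^ (j : ℕ))
          hint
    _ = (vandermonde (-b)).det / (m + 1).factorial := by
        have hscale := det_mul_row (fun j : Fin (m + 1) => ((j : ℝ) + 1)⁻¹)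
          (of fun k j : Fin (m + 1) =>
            (-b) k.succ ^ ((j : ℕ) + 1) - (-b) k.castSucc ^ ((j : ℕ) + 1))
        simp only [of_apply, Pi.neg_apply] at hscale
        simp only [hentry]
        rw [hscale, det_vandermonde_eq_det_pow_succ_sub (-b), prod_inv_distrib,
          prod_natCast_add_one_eq_factorial, inv_mul_eq_div]
        rfl

theorem det_vandermonde_natCast_add_two (m : ℕ) :
    (vandermonde fun k : Fin (m + 2) => (k : ℝ)).det
      = (m + 1).factorial * (vandermonde fun k : Fin (m + 1) => (k : ℝ)).det := by
  rw [det_vandermonde_id_eq_superFactorial, det_vandermonde_id_eq_superFactorial,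
    Nat.superFactorial_succ]
  push_cast
  rfl

noncomputable def weylLeading (n : ℕ) (lam : ℕ → ℝ) : ℝ :=
  ∏ i ∈ Icc 1 n, ∏ j ∈ Icc 1 n, if i < j then (lam i - lam j) / ((j : ℝ) - (i : ℝ)) else 1

theorem prod_Icc_one_eq_prod_fin {M : Type*} [CommMonoid M] (n : ℕ) (f : ℕ → M) :
    ∏ i ∈ Icc 1 n, f i = ∏ i : Fin n, f (i + 1) := by
  rw [← Ico_add_one_right_eq_Icc, prod_Ico_eq_prod_range,
    Fin.prod_univ_eq_prod_range (fun i => f (i + 1))]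
  simp [add_comm]

theorem weylLeading_eq_det_div_det (n : ℕ) (lam : ℕ → ℝ) :
    weylLeading n lam = (vandermonde fun k : Fin n => -lam (k + 1)).det /
      (vandermonde fun k : Fin n => (k : ℝ)).det := by
  simp only [weylLeading, prod_Icc_one_eq_prod_fin, det_vandermonde, ← prod_div_distrib]
  refine prod_congr rfl fun i _ => ?_
  rw [← filter_lt_eq_Ioi, prod_filter]
  refine prod_congr rfl fun j _ => ?_
  simp only [Fin.lt_def, add_lt_add_iff_right]
  split_ifs <;> push_cast <;> ring

theorem weylLeading_nonneg {n : ℕ} {lam : ℕ → ℝ} (hlam : AntitoneOn lam (Set.Icc 1 n)) :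
    0 ≤ weylLeading n lam := by
  refine prod_nonneg fun i hi => prod_nonneg fun j hj => ?_
  rw [mem_Icc] at hi hj
  split_ifs with hij
  · have : (i : ℝ) < j := by exact_mod_cast hij
    exact div_nonneg (sub_nonneg.2 (hlam hi hj hij.le)) (by linarith)
  · exact zero_le_one

end Vandermonde

open Set

theorem continuous_gcEntry (n : ℕ) (lam : ℕ → ℝ) (i j : ℕ) :
    Continuous fun x : GCIndex n → ℝ => gcEntry n lam x i j := by
  unfold gcEntry
  split_ifs <;> fun_prop

theorem isClosed_gcPolytope (n : ℕ) (lam : ℕ → ℝ) : IsClosed (gcPolytope n lam) := by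
  simp only [gcPolytope, ofPred_forall]
  refine isClosed_iInter fun i => isClosed_iInter fun j => isClosed_iInter fun _ =>
    isClosed_iInter fun _ => isClosed_iInter fun _ => ?_
  exact (isClosed_le (continuous_gcEntry ..) (continuous_gcEntry ..)).inter
    (isClosed_le (continuous_gcEntry ..) (continuous_gcEntry ..))

theorem gcEntry_self (n : ℕ) (lam : ℕ → ℝ) (x : GCIndex n → ℝ) (j : ℕ) :
    gcEntry n lam x n j = lam j := by
  rw [gcEntry, dif_neg (by omega), if_pos rfl]

theorem exists_fin_eq_val_add_one {n j : ℕ} (hj : 1 ≤ j) (hjn : j ≤ n) :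
    ∃ k : Fin n, j = k + 1 :=
  ⟨⟨j - 1, by omega⟩, by simp only; omega⟩

def oneIndexed {n : ℕ} (μ : Fin n → ℝ) (j : ℕ) : ℝ :=
  if h : j - 1 < n then μ ⟨j - 1, h⟩ else 0

@[simp]
theorem oneIndexed_val_add_one {n : ℕ} (μ : Fin n → ℝ) (k : Fin n) :
    oneIndexed μ (k + 1) = μ k := by
  simp [oneIndexed]

def interlacingBox (m : ℕ) (lam : ℕ → ℝ) : Set (Fin (m + 1) → ℝ) :=
  univ.pi fun k => Icc (lam (k + 2)) (lam (k + 1))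

theorem measurableSet_interlacingBox (m : ℕ) (lam : ℕ → ℝ) : MeasurableSet (interlacingBox m lam) :=
  MeasurableSet.univ_pi fun _ => measurableSet_Icc

theorem antitoneOn_oneIndexed {m : ℕ} {lam : ℕ → ℝ} (hlam : AntitoneOn lam (Icc 1 (m + 2)))
    {μ : Fin (m + 1) → ℝ} (hμ : μ ∈ interlacingBox m lam) :
    AntitoneOn (oneIndexed μ) (Icc 1 (m + 1)) := by
  rintro i ⟨hi1, hi⟩ j ⟨hj1, hj⟩ hij
  obtain ⟨k, rfl⟩ := exists_fin_eq_val_add_one hi1 hi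
  obtain ⟨l, rfl⟩ := exists_fin_eq_val_add_one hj1 hj
  simp only [oneIndexed_val_add_one]
  rcases hij.eq_or_lt with h | h
  · rw [show l = k from Fin.ext (by omega)]
  · calc μ l ≤ lam (l + 1) := (hμ l (mem_univ _)).2
      _ ≤ lam (k + 2) := hlam ⟨by omega, by omega⟩ ⟨by omega, by omega⟩ (by omega)
      _ ≤ μ k := (hμ k (mem_univ _)).1

def gcIndexSuccEquiv (m : ℕ) : Fin (m + 1) ⊕ GCIndex (m + 1) ≃ GCIndex (m + 2) where
  toFun
    | .inl k => ⟨⟨m, by omega⟩, k⟩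
    | .inr p => ⟨⟨p.1, by omega⟩, p.2⟩
  invFun q :=
    if h : q.1.val < m then .inr ⟨⟨q.1, h⟩, q.2⟩
    else .inl ⟨q.2, by omega⟩
  left_inv s := by
    rcases s with k | ⟨i, j⟩
    · simp
    · simp [show i.val < m by omega]
  right_inv := by
    rintro ⟨⟨i, hi⟩, j⟩
    by_cases h : i < m
    · simp [h]
    · obtain rfl : i = m := by omega
      simp

noncomputable def gcAttachRow (m : ℕ) :
    (Fin (m + 1) → ℝ) × (GCIndex (m + 1) → ℝ) ≃ᵐ (GCIndex (m + 2) → ℝ) :=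
  (MeasurableEquiv.sumPiEquivProdPi fun _ => ℝ).symm.trans
    (MeasurableEquiv.piCongrLeft (fun _ => ℝ) (gcIndexSuccEquiv m))

theorem measurePreserving_gcAttachRow (m : ℕ) :
    MeasurePreserving (gcAttachRow m) volume volume :=
  (volume_measurePreserving_piCongrLeft (fun _ => ℝ) (gcIndexSuccEquiv m)).comp
    (volume_measurePreserving_sumPiEquivProdPi_symm fun _ => ℝ)

@[simp]
theorem gcAttachRow_apply_inl (m : ℕ) (μ : Fin (m + 1) → ℝ) (y : GCIndex (m + 1) → ℝ)
    (k : Fin (m + 1)) : gcAttachRow m (μ, y) (gcIndexSuccEquiv m (.inl k)) = μ k := by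
  simp only [gcAttachRow, MeasurableEquiv.trans_apply, MeasurableEquiv.coe_piCongrLeft,
    MeasurableEquiv.coe_sumPiEquivProdPi_symm, Equiv.piCongrLeft_sumInl]

@[simp]
theorem gcAttachRow_apply_inr (m : ℕ) (μ : Fin (m + 1) → ℝ) (y : GCIndex (m + 1) → ℝ)
    (p : GCIndex (m + 1)) : gcAttachRow m (μ, y) (gcIndexSuccEquiv m (.inr p)) = y p := by
  simp only [gcAttachRow, MeasurableEquiv.trans_apply, MeasurableEquiv.coe_piCongrLeft,
    MeasurableEquiv.coe_sumPiEquivProdPi_symm, Equiv.piCongrLeft_sumInr]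

theorem gcEntry_gcAttachRow {m : ℕ} (lam : ℕ → ℝ) (μ : Fin (m + 1) → ℝ) (y : GCIndex (m + 1) → ℝ)
    {i j : ℕ} (hj : 1 ≤ j) (hji : j ≤ i) (hi : i ≤ m + 1) :
    gcEntry (m + 2) lam (gcAttachRow m (μ, y)) i j = gcEntry (m + 1) (oneIndexed μ) y i j := by
  rcases hi.lt_or_eq with hi | rfl
  · rw [gcEntry, gcEntry, dif_pos ⟨hj, hji, by omega⟩, dif_pos ⟨hj, hji, by omega⟩]
    exact gcAttachRow_apply_inr m μ y ⟨⟨i - 1, by omega⟩, ⟨j - 1, by simp; omega⟩⟩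
  · obtain ⟨k, rfl⟩ := exists_fin_eq_val_add_one hj hji
    rw [gcEntry_self, oneIndexed_val_add_one, gcEntry, dif_pos ⟨hj, hji, by omega⟩]
    exact gcAttachRow_apply_inl m μ y k

theorem gcAttachRow_mem_gcPolytope_iff {m : ℕ} (lam : ℕ → ℝ) (μ : Fin (m + 1) → ℝ)
    (y : GCIndex (m + 1) → ℝ) :
    gcAttachRow m (μ, y) ∈ gcPolytope (m + 2) lam ↔
      μ ∈ interlacingBox m lam ∧ y ∈ gcPolytope (m + 1) (oneIndexed μ) := by
  simp only [gcPolytope, mem_ofPred_eq]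
  set E := gcEntry (m + 2) lam (gcAttachRow m (μ, y))
  set F := gcEntry (m + 1) (oneIndexed μ) y
  have hEF {i j : ℕ} (hj : 1 ≤ j) (hji : j ≤ i) (hi : i ≤ m + 1) : E i j = F i j :=
    gcEntry_gcAttachRow lam μ y hj hji hi
  have hE_top (j : ℕ) : E (m + 2) j = lam j := gcEntry_self ..
  have hF_top (j : ℕ) : F (m + 1) j = oneIndexed μ j := gcEntry_self ..
  constructor
  · intro h
    refine ⟨fun k _ => ?_, fun i j hj hji hi => ?_⟩
    · have hk := h (m + 1) (k + 1) (by omega) (by omega) (by omega)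
      rw [hEF (by omega) (by omega) le_rfl, hF_top, hE_top, hE_top, oneIndexed_val_add_one] at hk
      exact ⟨hk.2, hk.1⟩
    · have hij := h i j hj hji (by omega)
      rwa [hEF hj hji (by omega), hEF hj (by omega) (by omega),
        hEF (by omega) (by omega) (by omega)] at hij
  · rintro ⟨hμ, hy⟩ i j hj hji hi
    rcases Nat.lt_or_ge i (m + 1) with hi' | hi'
    · rw [hEF hj hji (by omega), hEF hj (by omega) (by omega),
        hEF (by omega) (by omega) (by omega)]
      exact hy i j hj hji (by omega)
    · obtain rfl : i = m + 1 := by omega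
      obtain ⟨k, rfl⟩ := exists_fin_eq_val_add_one hj hji
      rw [hEF hj hji le_rfl, hF_top, hE_top, hE_top, oneIndexed_val_add_one]
      exact ⟨(hμ k (mem_univ _)).2, (hμ k (mem_univ _)).1⟩

theorem volume_gcPolytope_add_two (m : ℕ) (lam : ℕ → ℝ) :
    volume (gcPolytope (m + 2) lam) =
      ∫⁻ μ in interlacingBox m lam, volume (gcPolytope (m + 1) (oneIndexed μ)) := by
  have hmeas : MeasurableSet (gcAttachRow m ⁻¹' gcPolytope (m + 2) lam) :=
    (gcAttachRow m).measurable (isClosed_gcPolytope _ _).measurableSet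
  rw [← (measurePreserving_gcAttachRow m).measure_preimage_equiv, Measure.volume_eq_prod,
    Measure.prod_apply hmeas, ← lintegral_indicator (measurableSet_interlacingBox m lam)]
  refine lintegral_congr fun μ => ?_
  by_cases hμ : μ ∈ interlacingBox m lam
  · rw [indicator_of_mem hμ]
    congr 1
    ext y
    simp [gcAttachRow_mem_gcPolytope_iff, hμ]
  · rw [indicator_of_notMem hμ, measure_eq_zero_iff_ae_notMem]
    exact ae_of_all _ fun y => by simp [gcAttachRow_mem_gcPolytope_iff, hμ]

theorem continuous_weylLeading_oneIndexed (n : ℕ) :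
    Continuous fun μ : Fin n → ℝ => weylLeading n (oneIndexed μ) := by
  simp only [weylLeading_eq_det_div_det, oneIndexed_val_add_one]
  exact (continuous_matrix fun i j => (continuous_apply i).neg.pow _).matrix_det.div_const _

theorem setIntegral_weylLeading_oneIndexed {m : ℕ} {lam : ℕ → ℝ}
    (hlam : AntitoneOn lam (Icc 1 (m + 2))) :
    ∫ μ in interlacingBox m lam, weylLeading (m + 1) (oneIndexed μ) = weylLeading (m + 2) lam := by
  have hdet : ∫ μ in interlacingBox m lam, (Matrix.vandermonde fun k => -μ k).det =
      (Matrix.vandermonde fun k : Fin (m + 2) => -lam (k + 1)).det / (m + 1).factorial :=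
    setIntegral_pi_Icc_det_vandermonde_neg (fun k => lam (k + 1))
      fun k => hlam ⟨by omega, by omega⟩ ⟨by omega, by omega⟩ (by simp)
  simp only [weylLeading_eq_det_div_det, oneIndexed_val_add_one]
  rw [integral_div, hdet, det_vandermonde_natCast_add_two, div_div]

theorem volume_gcPolytope_of_le_one {n : ℕ} (hn : n ≤ 1) (lam : ℕ → ℝ) :
    volume (gcPolytope n lam) = 1 := by
  have : IsEmpty (GCIndex n) := ⟨fun p => by have := p.1.isLt; omega⟩
  rw [show gcPolytope n lam = univ from eq_univ_of_forall fun _ _ _ _ _ _ => by omega,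
    volume_pi, Measure.pi_univ, Finset.univ_eq_empty, Finset.prod_empty]

theorem volume_gcPolytope_eq_ofReal_weylLeading :
    ∀ (n : ℕ) {lam : ℕ → ℝ}, AntitoneOn lam (Icc 1 n) →
      volume (gcPolytope n lam) = ENNReal.ofReal (weylLeading n lam)
  | 0, lam, _ => by simp [volume_gcPolytope_of_le_one, weylLeading]
  | 1, lam, _ => by simp [volume_gcPolytope_of_le_one, weylLeading]
  | m + 2, lam, hlam => by
    have hbox := measurableSet_interlacingBox m lam
    have hint : IntegrableOn (fun μ => weylLeading (m + 1) (oneIndexed μ)) (interlacingBox m lam) :=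
      (continuous_weylLeading_oneIndexed _).continuousOn.integrableOn_compact
        (isCompact_univ_pi fun _ => isCompact_Icc)
    have hnonneg : 0 ≤ᵐ[volume.restrict (interlacingBox m lam)]
        fun μ => weylLeading (m + 1) (oneIndexed μ) :=
      ae_restrict_of_forall_mem hbox fun μ hμ => weylLeading_nonneg (antitoneOn_oneIndexed hlam hμ)
    calc volume (gcPolytope (m + 2) lam)
        = ∫⁻ μ in interlacingBox m lam, volume (gcPolytope (m + 1) (oneIndexed μ)) :=
          volume_gcPolytope_add_two m lam
      _ = ∫⁻ μ in interlacingBox m lam, ENNReal.ofReal (weylLeading (m + 1) (oneIndexed μ)) :=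
          setLIntegral_congr_fun hbox fun μ hμ =>
            volume_gcPolytope_eq_ofReal_weylLeading (m + 1) (antitoneOn_oneIndexed hlam hμ)
      _ = ENNReal.ofReal (weylLeading (m + 2) lam) := by
          rw [← ofReal_integral_eq_lintegral_ofReal hint hnonneg,
            setIntegral_weylLeading_oneIndexed hlam]

/-- The Lebesgue volume of the Gelfand–Cetlin polytope of `λ = (λ₁ ≥ ⋯ ≥ λₙ)` equals
`∏_{1 ≤ i < j ≤ n} (λᵢ - λⱼ)/(j - i)`, the leading homogeneous component of the Weyl
dimension polynomial of `GL(n, ℂ)`. -/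
theorem volume_gcPolytope (n : ℕ) (lam : ℕ → ℝ)
    (hlam : ∀ i j, 1 ≤ i → i ≤ j → j ≤ n → lam j ≤ lam i) :
    (volume (gcPolytope n lam)).toReal =
      ∏ i ∈ Finset.Icc 1 n, ∏ j ∈ Finset.Icc 1 n,
        if i < j then (lam i - lam j) / ((j : ℝ) - (i : ℝ)) else 1 := by
  have hanti : AntitoneOn lam (Icc 1 n) := fun i hi j hj hij => hlam i j hi.1 hij hj.2
  rw [volume_gcPolytope_eq_ofReal_weylLeading n hanti,
    ENNReal.toReal_ofReal (weylLeading_nonneg hanti), weylLeading]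
end
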